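/- Let H be a connected r-uniform hypergraph and let H' be a sub-hypergraph of H (a subfamily of its hyperedges). Suppose two distinct connected components of H' contain Berge-cycles of lengths a and b respectively (so these two Berge-cycles have disjoint vertex sets and disjoint hyperedge sets). Then H contains a Berge-path whose defining vertices include all a + b vertices of the two Berge-cycles; in particular, H contains a Berge-path of length at least a + b − 1. -/

import Mathlib

open scoped Classical

/-- A Berge-path of length `t` in the hypergraph `H` (a family of hyperedges):
an alternating sequence of `t+1` distinct vertices and `t` distinct hyperedges
`v₁, e₁, …, e_t, v_{t+1}` with `vᵢ, vᵢ₊₁ ∈ eᵢ`. -/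
structure BergePath {V : Type*} (H : Finset (Finset V)) (t : ℕ) where
  verts : Fin (t + 1) → V
  edges : Fin t → Finset V
  verts_inj : Function.Injective verts
  edges_inj : Function.Injective edges
  edges_mem : ∀ i, edges i ∈ H
  fst_mem : ∀ i : Fin t, verts i.castSucc ∈ edges i
  snd_mem : ∀ i : Fin t, verts i.succ ∈ edges i

/-- A Berge-cycle of length `t` in the hypergraph `H`: `t` distinct vertices and
`t` distinct hyperedges with `vᵢ, vᵢ₊₁ ∈ eᵢ`, indices mod `t`. -/
structure BergeCycle {V : Type*} (H : Finset (Finset V)) (t : ℕ) where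
  verts : Fin t → V
  edges : Fin t → Finset V
  verts_inj : Function.Injective verts
  edges_inj : Function.Injective edges
  edges_mem : ∀ i, edges i ∈ H
  fst_mem : ∀ i, verts i ∈ edges i
  snd_mem : ∀ i : Fin t, verts ⟨(i.val + 1) % t, Nat.mod_lt _ i.pos⟩ ∈ edges i

/-- `u` and `v` are joined by a Berge-path of `H`. -/
def BergeReachable {V : Type*} (H : Finset (Finset V)) (u v : V) : Prop :=
  ∃ t, ∃ P : BergePath H t, P.verts 0 = u ∧ P.verts (Fin.last t) = v

/-- A hypergraph on the vertex type `V` is connected if any two vertices are joined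
by a Berge-path. -/
def HConnected {V : Type*} (H : Finset (Finset V)) : Prop :=
  ∀ u v : V, u ≠ v → BergeReachable H u v

/-- The degree of a vertex: the number of hyperedges containing it. -/
noncomputable def hdeg {V : Type*} (H : Finset (Finset V)) (v : V) : ℕ :=
  (H.filter (fun e => v ∈ e)).card

/-- The vertex neighborhood of `v` in `H`. -/
noncomputable def nbhd {V : Type*} [Fintype V] (H : Finset (Finset V)) (v : V) : Finset V :=
  Finset.univ.filter (fun u => u ≠ v ∧ ∃ e ∈ H, v ∈ e ∧ u ∈ e)

/-- The sub-hypergraph induced by a set `S` of vertices: all hyperedges lying inside `S`. -/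
noncomputable def restrictTo {V : Type*} (H : Finset (Finset V)) (S : Finset V) :
    Finset (Finset V) :=
  H.filter (fun e => e ⊆ S)

/-- `DelProcess H D S T` : starting from the vertex set `S`, the vertex set `T` can be
reached by repeatedly deleting a vertex whose degree in the current induced
sub-hypergraph is less than `D` (together with all hyperedges containing it). -/
inductive DelProcess {V : Type*} (H : Finset (Finset V)) (D : ℕ) :
    Finset V → Finset V → Prop
  | refl (S : Finset V) : DelProcess H D S S
  | step (S T : Finset V) (v : V) (hv : v ∈ S)
      (hd : hdeg (restrictTo H S) v < D)
      (h : DelProcess H D (S.erase v) T) : DelProcess H D S T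

/-- The edge family of `H_{n,k}` for odd `k`, on vertex set `S` with kernel `A`:
all `r`-subsets of `S` having at most one vertex outside `A`. -/
noncomputable def HnkFamilyOdd {V : Type*} (r : ℕ) (S A : Finset V) : Finset (Finset V) :=
  S.powerset.filter (fun s => s.card = r ∧ (s \ A).card ≤ 1)

/-- The edge family of `H_{n,k}` for even `k`: additionally all `r`-subsets consisting of
`b1`, `b2` and `r-2` vertices of `A`. -/
noncomputable def HnkFamilyEven {V : Type*} (r : ℕ) (S A : Finset V) (b1 b2 : V) :
    Finset (Finset V) :=
  S.powerset.filter (fun s => s.card = r ∧ ((s \ A).card ≤ 1 ∨ s \ A = {b1, b2}))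

/-- `H` is (a copy of) the extremal hypergraph `H_{m,k}` on the vertex set `S`
(where `m = |S|`). Note that `⌊(k-1)/2⌋` equals `(k-1)/2` in ℕ for odd `k`,
and `(k-2)/2` for even `k`. -/
def IsHnkOn {V : Type*} (r k : ℕ) (S : Finset V) (H : Finset (Finset V)) : Prop :=
  ∃ A ⊆ S, A.card = (k - 1) / 2 ∧
    ((Odd k ∧ H = HnkFamilyOdd r S A) ∨
     (Even k ∧ ∃ b1 ∈ S \ A, ∃ b2 ∈ S \ A, b1 ≠ b2 ∧ H = HnkFamilyEven r S A b1 b2))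

/-- The extremal number of hyperedges:
`C(⌊(k-1)/2⌋, r-1)·(n − ⌊(k-1)/2⌋) + C(⌊(k-1)/2⌋, r) + [2 ∣ k]·C(⌊(k-1)/2⌋, r-2)`. -/
def extremalCount (r k n : ℕ) : ℕ :=
  ((k - 1) / 2).choose (r - 1) * (n - (k - 1) / 2) + ((k - 1) / 2).choose r +
    (if 2 ∣ k then ((k - 1) / 2).choose (r - 2) else 0)

/-- The threshold `N_{k,r}`. -/
def Nkr (r k : ℕ) : ℕ :=
  (r * (k - 1)).choose r + ((k - 1) / 2).choose (r - 1) * ((k - 1) / 2)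
    - ((k - 1) / 2).choose r - (if 2 ∣ k then ((k - 1) / 2).choose (r - 2) else 0)
    + r * (k - 1)

/-!
Take a shortest Berge-path `P` of `H` from a vertex of the first cycle to a vertex of the
second. By minimality, vertices of the first cycle lie only on the first edge of `P` and
vertices of the second only on its last edge. After moving its end vertices within these
edges, `P` meets each cycle in a single vertex `C.verts k` and at most in the edge `C.edges k`.
Going once around the first cycle, ending at its vertex `k` and skipping `C.edges k`, then
along `P`, then around the second cycle likewise, gives a path of length
`(a - 1) + |P| + (b - 1)`.
-/

namespace BergePath

variable {V : Type*} {H : Finset (Finset V)} {s t : ℕ}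

@[simps]
def reverse (P : BergePath H t) : BergePath H t where
  verts := P.verts ∘ Fin.rev
  edges := P.edges ∘ Fin.rev
  verts_inj := P.verts_inj.comp Fin.rev_injective
  edges_inj := P.edges_inj.comp Fin.rev_injective
  edges_mem i := P.edges_mem i.rev
  fst_mem i := by simpa [Fin.rev_castSucc] using P.snd_mem i.rev
  snd_mem i := by simpa [Fin.rev_succ] using P.fst_mem i.rev

@[simp] theorem range_reverse_verts (P : BergePath H t) :
    Set.range P.reverse.verts = Set.range P.verts :=
  Fin.revPerm.surjective.range_comp _

@[simp] theorem range_reverse_edges (P : BergePath H t) :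
    Set.range P.reverse.edges = Set.range P.edges :=
  Fin.revPerm.surjective.range_comp _

@[simps]
def drop (P : BergePath H t) (k : ℕ) (hk : k ≤ t) : BergePath H (t - k) where
  verts i := P.verts ⟨k + i, by omega⟩
  edges i := P.edges ⟨k + i, by omega⟩
  verts_inj i j h := by have := P.verts_inj h; simp only [Fin.mk.injEq] at this; omega
  edges_inj i j h := by have := P.edges_inj h; simp only [Fin.mk.injEq] at this; omega
  edges_mem i := P.edges_mem _
  fst_mem i := P.fst_mem ⟨k + i, by omega⟩
  snd_mem i := by simpa [Fin.succ, add_assoc] using P.snd_mem ⟨k + i, by omega⟩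

@[simps]
def updateVert (P : BergePath H t) (i : Fin (t + 1)) (x : V) (hx : ∀ j ≠ i, P.verts j ≠ x)
    (hprev : ∀ j : Fin t, j.succ = i → x ∈ P.edges j)
    (hnext : ∀ j : Fin t, j.castSucc = i → x ∈ P.edges j) : BergePath H t where
  verts := Function.update P.verts i x
  edges := P.edges
  verts_inj j k h := by
    simp only [Function.update_apply] at h
    split_ifs at h with hj hk hk
    · exact hj.trans hk.symm
    · exact absurd h.symm (hx k hk)
    · exact absurd h (hx j hj)
    · exact P.verts_inj h
  edges_inj := P.edges_inj
  edges_mem := P.edges_mem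
  fst_mem j := by
    rcases eq_or_ne j.castSucc i with h | h
    · simpa [← h] using hnext j h
    · simpa [Function.update_of_ne h] using P.fst_mem j
  snd_mem j := by
    rcases eq_or_ne j.succ i with h | h
    · simpa [← h] using hprev j h
    · simpa [Function.update_of_ne h] using P.snd_mem j

def append (P : BergePath H s) (Q : BergePath H t) (hPQ : P.verts (Fin.last s) = Q.verts 0)
    (hv : Set.range P.verts ∩ Set.range Q.verts ⊆ {Q.verts 0})
    (he : Disjoint (Set.range P.edges) (Set.range Q.edges)) : BergePath H (s + t) where
  verts i := if h : (i : ℕ) < s then P.verts ⟨i, by omega⟩ else Q.verts ⟨i - s, by omega⟩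
  edges i := if h : (i : ℕ) < s then P.edges ⟨i, h⟩ else Q.edges ⟨i - s, by omega⟩
  verts_inj i j h := by
    have hmeet : ∀ (p : Fin (s + 1)) (q : Fin (t + 1)), P.verts p = Q.verts q → (p : ℕ) < s →
        False := fun p q hpq hp => by
      have h0 : P.verts p = Q.verts 0 := hv (a := P.verts p) ⟨⟨p, rfl⟩, ⟨q, hpq.symm⟩⟩
      rw [← hPQ] at h0
      have := congrArg Fin.val (P.verts_inj h0)
      simp only [Fin.val_last] at this
      omega
    simp only at h
    split_ifs at h with hi hj hj
    · simpa [Fin.ext_iff] using P.verts_inj h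
    · exact (hmeet _ _ h hi).elim
    · exact (hmeet _ _ h.symm hj).elim
    · have := Fin.mk.inj_iff.1 (Q.verts_inj h); ext; omega
  edges_inj i j h := by
    simp only at h
    split_ifs at h with hi hj hj
    · simpa [Fin.ext_iff] using P.edges_inj h
    · exact (Set.disjoint_iff_forall_ne.1 he ⟨_, rfl⟩ ⟨_, rfl⟩ h).elim
    · exact (Set.disjoint_iff_forall_ne.1 he ⟨_, rfl⟩ ⟨_, rfl⟩ h.symm).elim
    · have := Fin.mk.inj_iff.1 (Q.edges_inj h); ext; omega
  edges_mem i := by split_ifs <;> apply edges_mem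
  fst_mem i := by
    simp only [Fin.val_castSucc]
    split_ifs with h
    · exact P.fst_mem ⟨i, h⟩
    · exact Q.fst_mem ⟨i - s, by omega⟩
  snd_mem i := by
    simp only [Fin.val_succ]
    split_ifs with h h' h'
    · exact P.snd_mem ⟨i, h⟩
    · have : (⟨i, h⟩ : Fin s).succ = Fin.last s := by
        ext; simp only [Fin.succ_mk, Fin.val_last]; omega
      simpa [this, hPQ, show (i : ℕ) + 1 - s = 0 by omega] using P.snd_mem ⟨i, h⟩
    · omega
    · convert Q.snd_mem ⟨i - s, by omega⟩ using 2
      ext; simp only [Fin.succ_mk]; omega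

theorem range_append_verts (P : BergePath H s) (Q : BergePath H t) (hPQ hv he) :
    Set.range (P.append Q hPQ hv he).verts = Set.range P.verts ∪ Set.range Q.verts := by
  ext v
  constructor
  · rintro ⟨i, rfl⟩
    simp only [append]
    split_ifs
    exacts [Or.inl ⟨_, rfl⟩, Or.inr ⟨_, rfl⟩]
  · rintro (⟨p, rfl⟩ | ⟨q, rfl⟩)
    · by_cases hp : (p : ℕ) < s
      · exact ⟨⟨p, by omega⟩, by simp [append, hp]⟩
      · obtain rfl : p = Fin.last s := Fin.ext (by simp only [Fin.val_last]; omega)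
        exact ⟨⟨s, by omega⟩, by simp [append, hPQ]⟩
    · exact ⟨⟨s + q, by omega⟩, by simp [append]⟩

theorem append_verts_last (P : BergePath H s) (Q : BergePath H t) (hPQ hv he) :
    (P.append Q hPQ hv he).verts (Fin.last _) = Q.verts (Fin.last t) := by
  simp [append, Fin.last]

theorem range_append_edges (P : BergePath H s) (Q : BergePath H t) (hPQ hv he) :
    Set.range (P.append Q hPQ hv he).edges = Set.range P.edges ∪ Set.range Q.edges := by
  ext e
  constructor
  · rintro ⟨i, rfl⟩
    simp only [append]
    split_ifs
    exacts [Or.inl ⟨_, rfl⟩, Or.inr ⟨_, rfl⟩]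
  · rintro (⟨p, rfl⟩ | ⟨q, rfl⟩)
    · exact ⟨⟨p, by omega⟩, by simp [append]⟩
    · exact ⟨⟨s + q, by omega⟩, by simp [append]⟩

theorem exists_bergePath_of_mem_edges (P : BergePath H t) (i : Fin t) {x : V}
    (hx : x ∈ P.edges i) : ∃ s ≤ t - i, ∃ Q : BergePath H s,
      Q.verts 0 = x ∧ Q.verts (Fin.last s) = P.verts (Fin.last t) := by
  by_cases h : ∃ j : Fin (t + 1), (i : ℕ) < j ∧ P.verts j = x
  · obtain ⟨j, hij, rfl⟩ := h
    refine ⟨t - j, by omega, P.drop j (by omega), by simp, ?_⟩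
    simp only [drop_verts, Fin.val_last]
    congr 1; ext; simp only [Fin.val_last]; omega
  · simp only [not_exists, not_and] at h
    let Q := P.drop i (by omega)
    have hQ : ∀ j ≠ 0, Q.verts j ≠ x := fun j hj =>
      h _ (by simpa using Fin.pos_iff_ne_zero.2 hj)
    have hQ0 : ∀ j : Fin (t - i), j.castSucc = 0 → x ∈ Q.edges j := fun j hj => by
      have : (j : ℕ) = 0 := by simpa [Fin.ext_iff] using hj
      simp only [Q, drop_edges]
      convert hx using 2
      ext; simp only [Nat.add_eq_left]; omega
    refine ⟨t - i, le_rfl, Q.updateVert 0 x hQ (fun j hj => absurd hj j.succ_ne_zero) hQ0,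
      by simp, ?_⟩
    have hlast : Fin.last (t - i) ≠ 0 :=
      Fin.ext_iff.not.2 (by simp only [Fin.val_last, Fin.coe_ofNat_eq_mod, Nat.zero_mod]; omega)
    rw [updateVert_verts, Function.update_of_ne hlast]
    simp only [Q, drop_verts, Fin.val_last]
    congr 1; ext; simp

end BergePath

def NoShorterBergePath {V : Type*} (H : Finset (Finset V)) (S T : Set V) (t : ℕ) : Prop :=
  ∀ s < t, ∀ Q : BergePath H s, Q.verts 0 ∈ S → Q.verts (Fin.last s) ∉ T

namespace NoShorterBergePath

variable {V : Type*} {H : Finset (Finset V)} {S T : Set V} {t : ℕ}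

theorem symm (h : NoShorterBergePath H S T t) : NoShorterBergePath H T S t :=
  fun s hs Q hQ0 hQl => h s hs Q.reverse (by simpa using hQl) (by simpa using hQ0)

theorem val_eq_zero_of_mem_edges (h : NoShorterBergePath H S T t) {P : BergePath H t}
    (hPT : P.verts (Fin.last t) ∈ T) {i : Fin t} {x : V} (hxS : x ∈ S) (hx : x ∈ P.edges i) :
    (i : ℕ) = 0 := by
  obtain ⟨s, hs, Q, hQ0, hQl⟩ := P.exists_bergePath_of_mem_edges i hx
  by_contra hi
  exact h s (by omega) Q (hQ0 ▸ hxS) (hQl ▸ hPT)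

end NoShorterBergePath

theorem BergePath.exists_noShorterBergePath {V : Type*} {H : Finset (Finset V)} {S T : Set V}
    (h : ∃ t, ∃ P : BergePath H t, P.verts 0 ∈ S ∧ P.verts (Fin.last t) ∈ T) :
    ∃ t, ∃ P : BergePath H t, P.verts 0 ∈ S ∧ P.verts (Fin.last t) ∈ T ∧
      NoShorterBergePath H S T t := by
  obtain ⟨P, hP⟩ := Nat.find_spec h
  exact ⟨_, P, hP.1, hP.2, fun s hs Q hQ0 hQl => Nat.find_min h hs ⟨Q, hQ0, hQl⟩⟩

theorem BergePath.eq_zero_of_verts_mem {V : Type*} {H : Finset (Finset V)} {t : ℕ}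
    (P : BergePath H t) {S : Set V} (hS : ∀ i, ∀ v ∈ S, v ∈ P.edges i → (i : ℕ) = 0)
    (hlast : P.verts (Fin.last t) ∉ S) {j : Fin (t + 1)} (hj : P.verts j ∈ S) : j = 0 := by
  have hjt : (j : ℕ) < t := by
    refine lt_of_le_of_ne (Nat.lt_succ_iff.1 j.2) fun h => hlast ?_
    rwa [← Fin.ext (h.trans (Fin.val_last t).symm)]
  ext
  exact hS ⟨j, hjt⟩ _ hj (P.fst_mem ⟨j, hjt⟩)

theorem BergePath.exists_update_ends {V : Type*} {H : Finset (Finset V)} {t : ℕ}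
    (P : BergePath H (t + 1)) {x y : V} (hx : x ∈ P.edges 0) (hy : y ∈ P.edges (Fin.last t))
    (hxy : x ≠ y) (hxP : ∀ j ≠ 0, P.verts j ≠ x) (hyP : ∀ j ≠ Fin.last _, P.verts j ≠ y) :
    ∃ Q : BergePath H (t + 1), Q.verts 0 = x ∧ Q.verts (Fin.last _) = y ∧ Q.edges = P.edges := by
  have h0 : (0 : Fin (t + 2)) ≠ Fin.last _ := (Fin.last_pos).ne
  let P₁ := P.updateVert 0 x hxP (fun j hj => absurd hj j.succ_ne_zero)
    (fun j hj => by rwa [Fin.castSucc_eq_zero_iff.1 hj])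
  have hyP₁ : ∀ j ≠ Fin.last _, P₁.verts j ≠ y := by
    intro j hj
    rcases eq_or_ne j 0 with rfl | hj0
    · simpa [P₁] using hxy
    · simpa [P₁, hj0] using hyP j hj
  have hprev : ∀ j : Fin (t + 1), j.succ = Fin.last _ → y ∈ P₁.edges j := fun j hj => by
    simpa [P₁, Fin.succ_inj.1 (hj.trans (Fin.succ_last t).symm)] using hy
  refine ⟨P₁.updateVert (Fin.last _) y hyP₁ hprev
    (fun j hj => absurd hj (Fin.castSucc_ne_last j)), ?_, by simp, rfl⟩
  simp [P₁, h0]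

namespace BergeCycle

variable {V : Type*} {H H' : Finset (Finset V)} {n : ℕ}

def mono (C : BergeCycle H' n) (h : H' ⊆ H) : BergeCycle H n where
  verts := C.verts
  edges := C.edges
  verts_inj := C.verts_inj
  edges_inj := C.edges_inj
  edges_mem i := h (C.edges_mem i)
  fst_mem := C.fst_mem
  snd_mem := C.snd_mem

@[simp] theorem mono_verts (C : BergeCycle H' n) (h : H' ⊆ H) : (C.mono h).verts = C.verts := rfl

@[simp] theorem mono_edges (C : BergeCycle H' n) (h : H' ⊆ H) : (C.mono h).edges = C.edges := rfl

theorem verts_add_one_mem (C : BergeCycle H (n + 1)) (i : Fin (n + 1)) :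
    C.verts (i + 1) ∈ C.edges i := by
  convert C.snd_mem i using 2
  ext
  simp [Fin.val_add]

theorem exists_verts_mem_of_mem (C : BergeCycle H n) {e : Finset V} {v : V}
    (hv : v ∈ Set.range C.verts) (hve : v ∈ e) :
    ∃ k, C.verts k ∈ e ∧ (e ∈ Set.range C.edges → e = C.edges k) := by
  by_cases he : e ∈ Set.range C.edges
  · obtain ⟨k, rfl⟩ := he
    exact ⟨k, C.fst_mem k, fun _ => rfl⟩
  · obtain ⟨k, rfl⟩ := hv
    exact ⟨k, hve, fun h => absurd h he⟩

theorem exists_bergePath_ending_at (C : BergeCycle H (n + 1)) (k : Fin (n + 1)) :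
    ∃ P : BergePath H n, P.verts (Fin.last n) = C.verts k ∧
      Set.range P.verts = Set.range C.verts ∧
      Set.range P.edges ⊆ Set.range C.edges \ {C.edges k} := by
  refine ⟨{ verts := fun i => C.verts (i + (k + 1))
            edges := fun i => C.edges (i.castSucc + (k + 1))
            verts_inj := C.verts_inj.comp (add_left_injective _)
            edges_inj := C.edges_inj.comp ((add_left_injective _).comp (Fin.castSucc_injective n))
            edges_mem := fun i => C.edges_mem _
            fst_mem := fun i => C.fst_mem _
            snd_mem := fun i => by
              simpa [← Fin.coeSucc_eq_succ, add_right_comm _ (1 : Fin (n + 1))] using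
                C.verts_add_one_mem (i.castSucc + (k + 1)) }, ?_, ?_, ?_⟩
  · simp [add_comm k, ← add_assoc]
  · exact (Equiv.addRight (k + 1)).surjective.range_comp _
  · rintro _ ⟨i, rfl⟩
    refine ⟨⟨_, rfl⟩, fun h => Fin.succ_ne_zero i ?_⟩
    have h' : i.castSucc + 1 + k = 0 + k := by
      rw [zero_add]
      convert C.edges_inj h using 1
      abel
    rw [← Fin.coeSucc_eq_succ]
    exact add_right_cancel h'

end BergeCycle

namespace BergePath

variable {V : Type*} {H : Finset (Finset V)} {n t : ℕ}

/-- `P` may use the edge `C.edges k` because the Hamiltonian path of `C` ending at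
`C.verts k` does without it. -/
def LeavesAt (P : BergePath H t) (C : BergeCycle H n) (k : Fin n) : Prop :=
  P.verts 0 = C.verts k ∧ Set.range P.verts ∩ Set.range C.verts ⊆ {C.verts k} ∧
    Set.range P.edges ∩ Set.range C.edges ⊆ {C.edges k}

theorem leavesAt_of_forall_mem_edges {P : BergePath H (t + 1)} {C : BergeCycle H n} {k : Fin n}
    (hP0 : P.verts 0 = C.verts k) (hlast : P.verts (Fin.last _) ∉ Set.range C.verts)
    (hC : ∀ i, ∀ v ∈ Set.range C.verts, v ∈ P.edges i → (i : ℕ) = 0)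
    (hk : P.edges 0 ∈ Set.range C.edges → P.edges 0 = C.edges k) : P.LeavesAt C k := by
  refine ⟨hP0, ?_, ?_⟩
  · rintro _ ⟨⟨j, rfl⟩, hj⟩
    rw [P.eq_zero_of_verts_mem hC hlast hj, hP0]
    rfl
  · rintro _ ⟨⟨i, rfl⟩, j, hj⟩
    obtain rfl : i = 0 := Fin.ext (hC i _ ⟨j, rfl⟩ (hj ▸ C.fst_mem j))
    exact hk ⟨j, hj⟩

theorem LeavesAt.exists_prepend {P : BergePath H t} {C : BergeCycle H (n + 1)} {k : Fin (n + 1)}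
    (hP : P.LeavesAt C k) :
    ∃ R : BergePath H (n + t), R.verts (Fin.last _) = P.verts (Fin.last t) ∧
      Set.range R.verts = Set.range C.verts ∪ Set.range P.verts ∧
      Set.range R.edges ⊆ Set.range C.edges ∪ Set.range P.edges := by
  obtain ⟨hP0, hPv, hPe⟩ := hP
  obtain ⟨A, hAk, hAv, hAe⟩ := C.exists_bergePath_ending_at k
  have hv : Set.range A.verts ∩ Set.range P.verts ⊆ {P.verts 0} := by
    rw [hAv, hP0, Set.inter_comm]
    exact hPv
  have he : Disjoint (Set.range A.edges) (Set.range P.edges) :=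
    Set.disjoint_left.2 fun e hA hP => (hAe hA).2 (hPe ⟨hP, (hAe hA).1⟩)
  refine ⟨A.append P (hAk.trans hP0.symm) hv he, append_verts_last .., ?_, ?_⟩
  · rw [range_append_verts, hAv]
  · rw [range_append_edges]
    exact Set.union_subset_union_left _ (hAe.trans Set.sdiff_subset)

theorem LeavesAt.of_subset {s : ℕ} {P : BergePath H t} {C : BergeCycle H n} {k : Fin n}
    (hP : P.LeavesAt C k) {Q : BergePath H s} {X : Set V} {Y : Set (Finset V)}
    (hQ0 : Q.verts 0 = P.verts 0) (hQv : Set.range Q.verts ⊆ X ∪ Set.range P.verts)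
    (hQe : Set.range Q.edges ⊆ Y ∪ Set.range P.edges) (hX : Disjoint X (Set.range C.verts))
    (hY : Disjoint Y (Set.range C.edges)) : Q.LeavesAt C k := by
  obtain ⟨hP0, hPv, hPe⟩ := hP
  refine ⟨hQ0.trans hP0, ?_, ?_⟩
  · rintro v ⟨hv, hvC⟩
    rcases hQv hv with hvX | hvP
    · exact (hX.notMem_of_mem_left hvX hvC).elim
    · exact hPv ⟨hvP, hvC⟩
  · rintro e ⟨he, heC⟩
    rcases hQe he with heY | heP
    · exact (hY.notMem_of_mem_left heY heC).elim
    · exact hPe ⟨heP, heC⟩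

end BergePath

theorem HConnected.exists_bergePath_meeting_only_ends {V : Type*} {H : Finset (Finset V)}
    (hconn : HConnected H) {S T : Set V} (hS : S.Nonempty) (hT : T.Nonempty)
    (hST : Disjoint S T) :
    ∃ t, ∃ P : BergePath H (t + 1), P.verts 0 ∈ S ∧ P.reverse.verts 0 ∈ T ∧
      (∀ i, ∀ v ∈ S, v ∈ P.edges i → (i : ℕ) = 0) ∧
      (∀ i, ∀ v ∈ T, v ∈ P.reverse.edges i → (i : ℕ) = 0) := by
  obtain ⟨t, P, hP0, hPt, hmin⟩ := BergePath.exists_noShorterBergePath (H := H) <| by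
    obtain ⟨x, hx⟩ := hS
    obtain ⟨y, hy⟩ := hT
    obtain ⟨t, P, hP0, hPt⟩ := hconn x y (hST.ne_of_mem hx hy)
    exact ⟨t, P, hP0 ▸ hx, hPt ▸ hy⟩
  obtain ⟨t, rfl⟩ : ∃ t', t = t' + 1 :=
    Nat.exists_eq_succ_of_ne_zero (by rintro rfl; exact hST.ne_of_mem hP0 hPt rfl)
  refine ⟨t, P, hP0, by simpa using hPt, fun i v hv hvi => ?_, fun i v hv hvi => ?_⟩
  · exact hmin.val_eq_zero_of_mem_edges hPt hv hvi
  · exact hmin.symm.val_eq_zero_of_mem_edges (P := P.reverse) (by simpa using hP0) hv hvi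

theorem exists_bergePath_leavesAt_leavesAt {V : Type*} {H : Finset (Finset V)} {n m : ℕ}
    (hconn : HConnected H) (C₁ : BergeCycle H (n + 1)) (C₂ : BergeCycle H (m + 1))
    (hdisj : Disjoint (Set.range C₁.verts) (Set.range C₂.verts)) :
    ∃ t, ∃ P : BergePath H (t + 1), ∃ k₁ k₂, P.LeavesAt C₁ k₁ ∧ P.reverse.LeavesAt C₂ k₂ := by
  obtain ⟨t, P, hP0, hPt, hC₁, hC₂⟩ := hconn.exists_bergePath_meeting_only_ends
    (Set.range_nonempty C₁.verts) (Set.range_nonempty C₂.verts) hdisj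
  obtain ⟨k₁, hk₁, hk₁e⟩ := C₁.exists_verts_mem_of_mem hP0 (P.fst_mem 0)
  obtain ⟨k₂, hk₂, hk₂e⟩ := C₂.exists_verts_mem_of_mem hPt (P.reverse.fst_mem 0)
  have hxP : ∀ j ≠ 0, P.verts j ≠ C₁.verts k₁ := fun j hj h =>
    hj (P.eq_zero_of_verts_mem hC₁ (by simpa using hdisj.notMem_of_mem_right hPt) (h ▸ ⟨k₁, rfl⟩))
  have hyP : ∀ j ≠ Fin.last _, P.verts j ≠ C₂.verts k₂ := fun j hj h =>
    hj <| Fin.rev_eq_iff.1 <| P.reverse.eq_zero_of_verts_mem hC₂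
      (by simpa using hdisj.notMem_of_mem_left hP0) (j := j.rev) (by simp [h])
  obtain ⟨Q, hQ0, hQl, hQe⟩ := P.exists_update_ends (by simpa using hk₁) (by simpa using hk₂)
    (hdisj.ne_of_mem ⟨k₁, rfl⟩ ⟨k₂, rfl⟩) hxP hyP
  have hQre : Q.reverse.edges = P.reverse.edges := by ext1; simp [hQe]
  refine ⟨t, Q, k₁, k₂, BergePath.leavesAt_of_forall_mem_edges hQ0 ?_ (hQe ▸ hC₁) (hQe ▸ hk₁e),
    BergePath.leavesAt_of_forall_mem_edges (by simpa using hQl) ?_ (hQre ▸ hC₂) (hQre ▸ hk₂e)⟩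
  · exact hQl ▸ hdisj.notMem_of_mem_right ⟨k₂, rfl⟩
  · simpa [hQ0] using hdisj.notMem_of_mem_left ⟨k₁, rfl⟩

theorem path_through_two_component_cycles_general
    {V : Type*} (H H' : Finset (Finset V))
    (hconn : HConnected H) (hsub : H' ⊆ H)
    (a b : ℕ) (ha : 1 ≤ a) (hb : 1 ≤ b)
    (C1 : BergeCycle H' a) (C2 : BergeCycle H' b)
    (hvdisj : Disjoint (Set.range C1.verts) (Set.range C2.verts))
    (hedisj : Disjoint (Set.range C1.edges) (Set.range C2.edges)) :
    ∃ t, ∃ P : BergePath H t,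
      (Set.range C1.verts ∪ Set.range C2.verts) ⊆ Set.range P.verts ∧
      a + b - 1 ≤ t := by
  obtain ⟨n, rfl⟩ := Nat.exists_eq_add_of_le' ha
  obtain ⟨m, rfl⟩ := Nat.exists_eq_add_of_le' hb
  obtain ⟨t, P, k₁, k₂, hP₁, hP₂⟩ :=
    exists_bergePath_leavesAt_leavesAt hconn (C1.mono hsub) (C2.mono hsub) hvdisj
  obtain ⟨R, hRl, hRv, hRe⟩ := hP₂.exists_prepend
  have hR : R.reverse.LeavesAt (C1.mono hsub) k₁ :=
    hP₁.of_subset (by simpa using hRl) (by simp [hRv]) (by simpa using hRe) hvdisj.symm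
      hedisj.symm
  obtain ⟨Q, -, hQv, -⟩ := hR.exists_prepend
  refine ⟨_, Q, ?_, by omega⟩
  rw [hQv, BergePath.range_reverse_verts, hRv, BergePath.range_reverse_verts]
  exact Set.union_subset_union le_rfl Set.subset_union_left

/-- Let `H` be a connected `r`-uniform hypergraph and `H' ⊆ H`. If two
distinct connected components of `H'` contain Berge-cycles of lengths `a` and `b` (so the
two cycles have disjoint vertex sets and disjoint hyperedge sets), then `H` contains a
Berge-path whose defining vertices include all `a + b` vertices of the two cycles; in
particular a Berge-path of length at least `a + b − 1`. Being in distinct components is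
expressed by: no Berge-path of `H'` joins a vertex of one cycle to a vertex of the other. -/
theorem path_through_two_component_cycles
    {V : Type*} [Fintype V] (r : ℕ) (H H' : Finset (Finset V))
    (huni : ∀ e ∈ H, e.card = r) (hconn : HConnected H) (hsub : H' ⊆ H)
    (a b : ℕ) (ha : 1 ≤ a) (hb : 1 ≤ b)
    (C1 : BergeCycle H' a) (C2 : BergeCycle H' b)
    (hcomp : ∀ u v : V, u ∈ Set.range C1.verts → v ∈ Set.range C2.verts →
      ¬ BergeReachable H' u v)
    (hvdisj : Disjoint (Set.range C1.verts) (Set.range C2.verts))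
    (hedisj : Disjoint (Set.range C1.edges) (Set.range C2.edges)) :
    ∃ t, ∃ P : BergePath H t,
      (Set.range C1.verts ∪ Set.range C2.verts) ⊆ Set.range P.verts ∧
      a + b - 1 ≤ t :=
  path_through_two_component_cycles_general H H' hconn hsub a b ha hb C1 C2 hvdisj hedisj
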